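/- arXiv:2210.05191 — 3 statements merged into one kernel-verified Lean document; each statement's English description precedes it below -/
import Mathlib

section
/- Let α ∈ [0,2]. There exists a constant C > 0 such that for all v ∈ ℝ³ and I ≥ 0, ∫_{ℝ³} e^{-|v_*|²/2} (|v - v_*| + √I)^{2-α} dv_* ≥ C (1 + |v| + √I)^{2-α}. -/
open MeasureTheory Real

private lemma gauss_int3 {b : ℝ} (hb : 0 < b) :
    Integrable (fun v : EuclideanSpace ℝ (Fin 3) => Real.exp (-(b * ‖v‖ ^ 2))) := by
  have h : Integrable (fun v : EuclideanSpace ℝ (Fin 3) =>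
      Complex.exp (((-(b * ‖v‖ ^ 2) : ℝ) : ℂ))) := by
    have h0 := GaussianFourier.integrable_cexp_neg_mul_sq_norm_add
      (V := EuclideanSpace ℝ (Fin 3)) (b := (b : ℂ)) (by simpa using hb) 0 0
    refine h0.congr (Filter.Eventually.of_forall fun v => ?_)
    norm_num
  have h2 := h.re
  refine h2.congr (Filter.Eventually.of_forall fun v => ?_)
  simp only [RCLike.re_to_complex]
  exact Complex.exp_ofReal_re _

private lemma gauss_half_int3 :
    Integrable (fun v : EuclideanSpace ℝ (Fin 3) => Real.exp (-‖v‖ ^ 2 / 2)) := by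
  have h : (fun v : EuclideanSpace ℝ (Fin 3) => Real.exp (-‖v‖ ^ 2 / 2))
      = (fun v : EuclideanSpace ℝ (Fin 3) => Real.exp (-(1/2 * ‖v‖ ^ 2))) := by
    funext v; congr 1; ring
  rw [h]
  exact gauss_int3 (by norm_num)

private lemma rpow_le_one_add_sq3 {b β : ℝ} (hb : 0 ≤ b) (hβ0 : 0 ≤ β) (hβ2 : β ≤ 2) :
    b ^ β ≤ 1 + b ^ 2 := by
  rcases le_total b 1 with h | h
  · have := Real.rpow_le_one hb h hβ0
    nlinarith [sq_nonneg b]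
  · have h1 : b ^ β ≤ b ^ (2:ℝ) := Real.rpow_le_rpow_of_exponent_le h hβ2
    have h2 : b ^ (2:ℝ) = b ^ (2:ℕ) := Real.rpow_natCast b 2
    rw [h2] at h1
    nlinarith

private lemma integrand_integrable3 (β : ℝ) (hβ0 : 0 ≤ β) (hβ2 : β ≤ 2)
    (v : EuclideanSpace ℝ (Fin 3)) (s : ℝ) (hs : 0 ≤ s) :
    Integrable (fun vs : EuclideanSpace ℝ (Fin 3) =>
      Real.exp (-‖vs‖ ^ 2 / 2) * (‖v - vs‖ + s) ^ β) := by
  have hcont : Continuous (fun vs : EuclideanSpace ℝ (Fin 3) =>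
      Real.exp (-‖vs‖ ^ 2 / 2) * (‖v - vs‖ + s) ^ β) := by
    apply Continuous.mul
    · exact (((continuous_norm.pow 2).neg.div_const 2)).rexp
    · exact (Real.continuous_rpow_const hβ0).comp
        (((continuous_const.sub continuous_id).norm).add continuous_const)
  set a : ℝ := ‖v‖ + s with ha
  have ha0 : 0 ≤ a := by positivity
  refine ((gauss_int3 (b := 1/4) (by norm_num)).const_mul (9 + 2 * a ^ 2)).mono
    hcont.aestronglyMeasurable (Filter.Eventually.of_forall fun vs => ?_)
  set t : ℝ := ‖vs‖ ^ 2 with ht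
  have ht0 : (0:ℝ) ≤ t := by positivity
  set u : ℝ := Real.exp (-(1/4 * t)) with hu
  have hu0 : 0 < u := Real.exp_pos _
  have hu1 : u * (1 + 1/4 * t) ≤ 1 := by
    have hx : 1 + 1/4 * t ≤ Real.exp (1/4 * t) := by
      have := Real.add_one_le_exp (1/4 * t); linarith
    calc u * (1 + 1/4 * t) ≤ u * Real.exp (1/4 * t) :=
          mul_le_mul_of_nonneg_left hx hu0.le
      _ = 1 := by rw [hu, ← Real.exp_add]; norm_num
  have huu : Real.exp (-t / 2) = u * u := by
    rw [hu, ← Real.exp_add]; congr 1; ring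
  set b : ℝ := ‖v - vs‖ + s with hb
  have hb0 : 0 ≤ b := by positivity
  have hbar : b ≤ a + ‖vs‖ := by
    have := norm_sub_le v vs
    simp only [hb, ha]; linarith
  have hbs : b ^ β ≤ 1 + 2 * a ^ 2 + 2 * t := by
    have h1 : b ^ β ≤ 1 + b ^ 2 := rpow_le_one_add_sq3 hb0 hβ0 hβ2
    have : b ^ 2 ≤ 2 * a ^ 2 + 2 * ‖vs‖ ^ 2 := by
      nlinarith [sq_nonneg (a - ‖vs‖), norm_nonneg vs, mul_le_mul hbar hbar hb0 (by positivity : (0:ℝ) ≤ a + ‖vs‖)]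
    simpa only [← ht] using le_trans h1 (by linarith)
  have hfpos : 0 ≤ b ^ β := Real.rpow_nonneg hb0 _
  have hnorm1 : ‖Real.exp (-‖vs‖ ^ 2 / 2) * b ^ β‖ = Real.exp (-t / 2) * b ^ β := by
    rw [Real.norm_of_nonneg (by positivity)]
  rw [hnorm1, Real.norm_of_nonneg (by positivity), huu]
  have hule : u ≤ 1 := by nlinarith
  have claim : u * (1 + 2 * a ^ 2 + 2 * t) ≤ 9 + 2 * a ^ 2 := by nlinarith
  calc u * u * b ^ β ≤ u * u * (1 + 2 * a ^ 2 + 2 * t) := by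
        nlinarith [mul_le_mul_of_nonneg_left hbs (mul_nonneg hu0.le hu0.le)]
    _ ≤ (9 + 2 * a ^ 2) * u := by nlinarith
    _ = (9 + 2 * a ^ 2) * Real.exp (-(1/4 * ‖vs‖ ^ 2)) := by rw [hu, ht]

private lemma ball_int_pos3 (c : EuclideanSpace ℝ (Fin 3)) :
    0 < ∫ x in Metric.closedBall c (1/2), Real.exp (-‖x‖ ^ 2 / 2) := by
  rw [setIntegral_pos_iff_support_of_nonneg_ae]
  · have hs : Function.support (fun x : EuclideanSpace ℝ (Fin 3) =>
        Real.exp (-‖x‖ ^ 2 / 2)) = Set.univ := by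
      ext x; simp [Real.exp_ne_zero]
    rw [hs, Set.univ_inter]
    exact Metric.measure_closedBall_pos _ _ (by norm_num)
  · exact Filter.Eventually.of_forall fun x => (Real.exp_pos _).le
  · exact gauss_half_int3.integrableOn

private lemma key_bound3 (β : ℝ) (hβ0 : 0 ≤ β) (hβ2 : β ≤ 2)
    (v : EuclideanSpace ℝ (Fin 3)) (s : ℝ) (hs : 0 ≤ s) (c : EuclideanSpace ℝ (Fin 3))
    (hgeo : ∀ vs ∈ Metric.closedBall c (1/2), (1 + ‖v‖ + s) / 4 ≤ ‖v - vs‖ + s) :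
    (∫ x in Metric.closedBall c (1/2), Real.exp (-‖x‖ ^ 2 / 2)) / 16 * (1 + ‖v‖ + s) ^ β ≤
      ∫ vs : EuclideanSpace ℝ (Fin 3), Real.exp (-‖vs‖ ^ 2 / 2) * (‖v - vs‖ + s) ^ β := by
  set X : ℝ := 1 + ‖v‖ + s with hX
  have hX0 : 0 < X := by positivity
  set S := Metric.closedBall c (1/2) with hS
  set m : ℝ := ∫ x in S, Real.exp (-‖x‖ ^ 2 / 2) with hm
  have hm0 : 0 ≤ m :=
    setIntegral_nonneg measurableSet_closedBall fun x _ => (Real.exp_pos _).le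
  have hint := integrand_integrable3 β hβ0 hβ2 v s hs
  have step1 : (∫ vs in S, Real.exp (-‖vs‖ ^ 2 / 2) * (X / 4) ^ β) ≤
      ∫ vs in S, Real.exp (-‖vs‖ ^ 2 / 2) * (‖v - vs‖ + s) ^ β := by
    refine setIntegral_mono_on (gauss_half_int3.mul_const _).integrableOn
      hint.integrableOn measurableSet_closedBall fun vs hvs => ?_
    exact mul_le_mul_of_nonneg_left
      (Real.rpow_le_rpow (by positivity) (hgeo vs hvs) hβ0) (Real.exp_pos _).le
  have step2 : (∫ vs in S, Real.exp (-‖vs‖ ^ 2 / 2) * (X / 4) ^ β) = m * (X / 4) ^ β := by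
    rw [integral_mul_const]
  have step3 : (∫ vs in S, Real.exp (-‖vs‖ ^ 2 / 2) * (‖v - vs‖ + s) ^ β) ≤
      ∫ vs : EuclideanSpace ℝ (Fin 3), Real.exp (-‖vs‖ ^ 2 / 2) * (‖v - vs‖ + s) ^ β :=
    setIntegral_le_integral hint (Filter.Eventually.of_forall fun vs => by positivity)
  have h4 : (X / 4) ^ β = (1/4 : ℝ) ^ β * X ^ β := by
    rw [show X / 4 = (1/4 : ℝ) * X by ring, Real.mul_rpow (by norm_num) hX0.le]
  have h116 : (1/16 : ℝ) ≤ (1/4 : ℝ) ^ β := by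
    have h := Real.rpow_le_rpow_of_exponent_ge (by norm_num : (0:ℝ) < 1/4) (by norm_num) hβ2
    calc (1/16 : ℝ) = (1/4 : ℝ) ^ (2:ℝ) := by
          rw [show (2:ℝ) = ((2:ℕ):ℝ) by norm_num, Real.rpow_natCast]; norm_num
      _ ≤ (1/4 : ℝ) ^ β := h
  have hXβ : 0 ≤ X ^ β := Real.rpow_nonneg hX0.le _
  have hfinal : m / 16 * X ^ β ≤ m * (X / 4) ^ β := by
    rw [h4]
    nlinarith [mul_le_mul_of_nonneg_left h116 hm0]
  calc m / 16 * X ^ β ≤ m * (X / 4) ^ β := hfinal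
    _ = ∫ vs in S, Real.exp (-‖vs‖ ^ 2 / 2) * (X / 4) ^ β := step2.symm
    _ ≤ ∫ vs in S, Real.exp (-‖vs‖ ^ 2 / 2) * (‖v - vs‖ + s) ^ β := step1
    _ ≤ _ := step3

theorem collision_frequency_lower_bound (α : ℝ) (hα : α ∈ Set.Icc (0:ℝ) 2) :
    ∃ C > 0, ∀ (v : EuclideanSpace ℝ (Fin 3)) (I : ℝ), 0 ≤ I →
      C * (1 + ‖v‖ + Real.sqrt I) ^ (2 - α) ≤
        ∫ vs : EuclideanSpace ℝ (Fin 3),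
          Real.exp (-‖vs‖ ^ 2 / 2) * (‖v - vs‖ + Real.sqrt I) ^ (2 - α) := by
  obtain ⟨hα0, hα2⟩ := hα
  set β : ℝ := 2 - α with hβ
  have hβ0 : 0 ≤ β := by linarith
  have hβ2 : β ≤ 2 := by linarith
  set x0 : EuclideanSpace ℝ (Fin 3) := (3:ℝ) • EuclideanSpace.single (0 : Fin 3) (1:ℝ) with hx0
  have hx0norm : ‖x0‖ = 3 := by
    rw [hx0, norm_smul, EuclideanSpace.norm_single]
    norm_num
  set m1 : ℝ := ∫ x in Metric.closedBall (0 : EuclideanSpace ℝ (Fin 3)) (1/2),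
    Real.exp (-‖x‖ ^ 2 / 2) with hm1
  set m2 : ℝ := ∫ x in Metric.closedBall x0 (1/2), Real.exp (-‖x‖ ^ 2 / 2) with hm2
  have hm1pos : 0 < m1 := ball_int_pos3 _
  have hm2pos : 0 < m2 := ball_int_pos3 _
  refine ⟨min m1 m2 / 16, by positivity, fun v I hI => ?_⟩
  set s : ℝ := Real.sqrt I with hsdef
  have hs : 0 ≤ s := Real.sqrt_nonneg I
  rcases le_total ‖v‖ 1 with hv | hv
  · -- use the ball around x0
    have hgeo : ∀ vs ∈ Metric.closedBall x0 (1/2), (1 + ‖v‖ + s) / 4 ≤ ‖v - vs‖ + s := by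
      intro vs hvs
      rw [Metric.mem_closedBall, dist_eq_norm] at hvs
      have h1 : ‖x0‖ - ‖vs‖ ≤ ‖vs - x0‖ := by
        rw [norm_sub_rev]; exact norm_sub_norm_le _ _
      have h2 : ‖vs‖ - ‖v‖ ≤ ‖v - vs‖ := by
        rw [norm_sub_rev]; exact norm_sub_norm_le _ _
      rw [hx0norm] at h1
      linarith
    have := key_bound3 β hβ0 hβ2 v s hs x0 hgeo
    calc min m1 m2 / 16 * (1 + ‖v‖ + s) ^ β ≤ m2 / 16 * (1 + ‖v‖ + s) ^ β := by
          have : (0:ℝ) ≤ (1 + ‖v‖ + s) ^ β := Real.rpow_nonneg (by positivity) _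
          nlinarith [min_le_right m1 m2]
      _ ≤ _ := this
  · -- use the ball around 0
    have hgeo : ∀ vs ∈ Metric.closedBall (0 : EuclideanSpace ℝ (Fin 3)) (1/2),
        (1 + ‖v‖ + s) / 4 ≤ ‖v - vs‖ + s := by
      intro vs hvs
      rw [Metric.mem_closedBall, dist_zero_right] at hvs
      have h2 : ‖v‖ - ‖vs‖ ≤ ‖v - vs‖ := norm_sub_norm_le _ _
      linarith
    have := key_bound3 β hβ0 hβ2 v s hs 0 hgeo
    calc min m1 m2 / 16 * (1 + ‖v‖ + s) ^ β ≤ m1 / 16 * (1 + ‖v‖ + s) ^ β := by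
          have : (0:ℝ) ≤ (1 + ‖v‖ + s) ^ β := Real.rpow_nonneg (by positivity) _
          nlinarith [min_le_left m1 m2]
      _ ≤ _ := this
end

section
/- Let β > 0 and w(v,I) = (1 + |v| + √I)^β for v ∈ ℝ³, I ≥ 0. If v + v_* = v' + v'_* and |v|²/2 + |v_*|²/2 + I + I_* = |v'|²/2 + |v'_*|²/2 + I' + I'_* (with all internal energies nonnegative), then w(v,I) ≤ C_β · w(v',I') · w(v'_*,I'_*) for a constant C_β depending only on β. -/
theorem weight_product_bound (β : ℝ) (hβ : 0 < β) :
    ∃ C > 0, ∀ (v vs v' vs' : EuclideanSpace ℝ (Fin 3)) (I Is I' Is' : ℝ),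
      0 ≤ I → 0 ≤ Is → 0 ≤ I' → 0 ≤ Is' →
      v + vs = v' + vs' →
      ‖v‖ ^ 2 / 2 + ‖vs‖ ^ 2 / 2 + I + Is = ‖v'‖ ^ 2 / 2 + ‖vs'‖ ^ 2 / 2 + I' + Is' →
      (1 + ‖v‖ + Real.sqrt I) ^ β ≤
        C * ((1 + ‖v'‖ + Real.sqrt I') ^ β * (1 + ‖vs'‖ + Real.sqrt Is') ^ β) := by
  refine ⟨(9 : ℝ) ^ β, Real.rpow_pos_of_pos (by norm_num) β, ?_⟩
  intro v vs v' vs' I Is I' Is' hI hIs hI' hIs' _ hE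
  set A := 1 + ‖v'‖ + Real.sqrt I' with hA
  set B := 1 + ‖vs'‖ + Real.sqrt Is' with hB
  have hnv : (0:ℝ) ≤ ‖v‖ := norm_nonneg _
  have hnvs : (0:ℝ) ≤ ‖vs‖ := norm_nonneg _
  have hnv' : (0:ℝ) ≤ ‖v'‖ := norm_nonneg _
  have hnvs' : (0:ℝ) ≤ ‖vs'‖ := norm_nonneg _
  have hsI : Real.sqrt I ^ 2 = I := Real.sq_sqrt hI
  have hsI' : Real.sqrt I' ^ 2 = I' := Real.sq_sqrt hI'
  have hsIs' : Real.sqrt Is' ^ 2 = Is' := Real.sq_sqrt hIs'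
  have hsInn : 0 ≤ Real.sqrt I := Real.sqrt_nonneg _
  have hsI'nn : 0 ≤ Real.sqrt I' := Real.sqrt_nonneg _
  have hsIs'nn : 0 ≤ Real.sqrt Is' := Real.sqrt_nonneg _
  -- the key scalar bound
  set t := ‖v'‖ + ‖vs'‖ + 2 * Real.sqrt I' + 2 * Real.sqrt Is' with ht
  have htnn : 0 ≤ t := by positivity
  have hS : ‖v‖ ^ 2 ≤ t ^ 2 := by nlinarith [sq_nonneg ‖v‖, sq_nonneg ‖vs‖]
  have hvle : ‖v‖ ≤ t := by nlinarith
  have hIle : Real.sqrt I ≤ t := by nlinarith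
  have hkey : 1 + ‖v‖ + Real.sqrt I ≤ 9 * (A * B) := by
    have hA1 : 1 ≤ A := by simp only [hA]; linarith
    have hB1 : 1 ≤ B := by simp only [hB]; linarith
    have htAB : t ≤ 2 * (A - 1) + 2 * (B - 1) := by simp only [hA, hB]; linarith
    have hprod : 0 ≤ (A - 1) * (B - 1) := mul_nonneg (by linarith) (by linarith)
    have hexp : A * B = (A - 1) * (B - 1) + A + B - 1 := by ring
    linarith
  have hAnn : 0 ≤ A := by positivity
  have hBnn : 0 ≤ B := by positivity
  have hbase : 0 ≤ 1 + ‖v‖ + Real.sqrt I := by positivity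
  calc (1 + ‖v‖ + Real.sqrt I) ^ β ≤ (9 * (A * B)) ^ β :=
        Real.rpow_le_rpow hbase hkey hβ.le
    _ = 9 ^ β * ((A * B) ^ β) := Real.mul_rpow (by norm_num) (by positivity)
    _ = 9 ^ β * (A ^ β * B ^ β) := by rw [Real.mul_rpow hAnn hBnn]
end

section
/- Let δ ≥ 2 and m ∈ [0, 1/8]. There is a constant C (depending on δ, m) such that for all v, v_* ∈ ℝ³ and I, I_* > 0, the function k₁(v,v_*,I,I_*) := I_*^{δ/4−1} e^{−|v|²/16 − |v_*|²/16 − I/8 − I_*/8} satisfies ∫_{ℝ³×ℝ₊} k₁(v,v_*,I,I_*) e^{|v−v_*|²/64} (1+I_*)^m (w(v,I)/w(v_*,I_*)) dv_* dI_* ≤ C e^{−|v|²/32 − I/16}, where w(v,I) = (1+|v|+√I)^β for any fixed β ∈ ℝ. -/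
open MeasureTheory Real


private lemma hpow_aux (x t : ℝ) (hx : 0 ≤ x) : (1 + x) ^ t ≤ Real.exp (|t| * x) := by
  rcases le_or_gt 0 t with ht | ht
  · calc (1+x)^t ≤ (Real.exp x)^t :=
        Real.rpow_le_rpow (by linarith) (by linarith [Real.add_one_le_exp x]) ht
    _ = Real.exp (x * t) := (Real.exp_mul x t).symm
    _ ≤ Real.exp (|t| * x) := by
        apply Real.exp_le_exp.2
        rw [abs_of_nonneg ht]; nlinarith
  · calc (1+x)^t ≤ 1 := Real.rpow_le_one_of_one_le_of_nonpos (by linarith) ht.le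
    _ ≤ Real.exp (|t| * x) := Real.one_le_exp (by positivity)

private lemma ptwise_aux (δ m β : ℝ) (hm0 : 0 ≤ m) (hm1 : m ≤ 1/8)
    (v vs : EuclideanSpace ℝ (Fin 3)) (I Is : ℝ) (hI : 0 < I) (hIs : 0 < Is) :
    Is ^ (δ / 4 - 1) *
        Real.exp (-‖v‖ ^ 2 / 16 - ‖vs‖ ^ 2 / 16 - I / 8 - Is / 8) *
        Real.exp (‖v - vs‖ ^ 2 / 64) * (1 + Is) ^ m *
        ((1 + ‖v‖ + Real.sqrt I) ^ β / (1 + ‖vs‖ + Real.sqrt Is) ^ β)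
    ≤ Real.exp (76 * |β| ^ 2 + 2) * Real.exp (-‖v‖ ^ 2 / 32 - I / 16) *
        (Real.exp (-(1/128) * ‖vs‖ ^ 2) * (Is ^ (δ / 4 - 1) * Real.exp (-(1/16) * Is))) := by
  set a := ‖v‖ with ha_def
  set b := ‖vs‖ with hb_def
  set i := Real.sqrt I with hi_def
  set s := Real.sqrt Is with hs_def
  have ha : 0 ≤ a := norm_nonneg _
  have hb : 0 ≤ b := norm_nonneg _
  have hi : 0 ≤ i := Real.sqrt_nonneg _
  have hs : 0 ≤ s := Real.sqrt_nonneg _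
  have hi2 : i ^ 2 = I := Real.sq_sqrt hI.le
  have hs2 : s ^ 2 = Is := Real.sq_sqrt hIs.le
  have hp : 0 ≤ |β| := abs_nonneg _
  have hIsnn : 0 ≤ Is := hIs.le
  -- bound on cross term
  have hnd : ‖v - vs‖ ^ 2 ≤ (a + b) ^ 2 := by
    have := norm_sub_le v vs
    nlinarith [norm_nonneg (v - vs)]
  -- ratio bound
  have hrat : (1 + a + i) ^ β / (1 + b + s) ^ β ≤
      Real.exp (|β| * (a + i)) * Real.exp (|β| * (b + s)) := by
    have h1 : (1 + a + i) ^ β ≤ Real.exp (|β| * (a + i)) := by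
      have := hpow_aux (a + i) β (by linarith)
      rwa [← add_assoc] at this
    have h2 : ((1 + b + s) ^ β)⁻¹ ≤ Real.exp (|β| * (b + s)) := by
      have hb2 := hpow_aux (b + s) (-β) (by linarith)
      rw [← add_assoc, Real.rpow_neg (by linarith), abs_neg] at hb2
      exact hb2
    rw [div_eq_mul_inv]
    exact mul_le_mul h1 h2 (by positivity) (Real.exp_nonneg _)
  -- (1+Is)^m bound
  have hmb : (1 + Is) ^ m ≤ Real.exp ((1/4) * s) := by
    have h1 : (1 + Is : ℝ) ≤ (1 + s) ^ (2 : ℝ) := by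
      rw [show ((2:ℝ)) = ((2:ℕ):ℝ) by norm_num, Real.rpow_natCast]
      nlinarith
    calc (1 + Is) ^ m ≤ ((1 + s) ^ (2:ℝ)) ^ m :=
          Real.rpow_le_rpow (by linarith) h1 hm0
      _ = (1 + s) ^ (2 * m) := by rw [← Real.rpow_mul (by linarith)]
      _ ≤ Real.exp (|2 * m| * s) := hpow_aux s (2 * m) hs
      _ ≤ Real.exp ((1/4) * s) := by
          apply Real.exp_le_exp.2
          have : |2 * m| = 2 * m := abs_of_nonneg (by linarith)
          rw [this]; nlinarith
  have hrpow_nn : 0 ≤ Is ^ (δ / 4 - 1) := Real.rpow_nonneg hIsnn _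
  calc Is ^ (δ / 4 - 1) *
        Real.exp (-a ^ 2 / 16 - b ^ 2 / 16 - I / 8 - Is / 8) *
        Real.exp (‖v - vs‖ ^ 2 / 64) * (1 + Is) ^ m *
        ((1 + a + i) ^ β / (1 + b + s) ^ β)
      ≤ Is ^ (δ / 4 - 1) *
        Real.exp (-a ^ 2 / 16 - b ^ 2 / 16 - I / 8 - Is / 8) *
        Real.exp ((a + b) ^ 2 / 64) * Real.exp ((1/4) * s) *
        (Real.exp (|β| * (a + i)) * Real.exp (|β| * (b + s))) := by
        gcongr
    _ = Is ^ (δ / 4 - 1) *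
        Real.exp ((-a ^ 2 / 16 - b ^ 2 / 16 - I / 8 - Is / 8) + (a + b) ^ 2 / 64
          + (1/4) * s + (|β| * (a + i) + |β| * (b + s))) := by
        simp only [mul_assoc, ← Real.exp_add]
    _ ≤ Is ^ (δ / 4 - 1) *
        Real.exp ((76 * |β| ^ 2 + 2) + (-a ^ 2 / 32 - I / 16) + (-(1/128) * b ^ 2)
          + (-(1/16) * Is)) := by
        apply mul_le_mul_of_nonneg_left _ hrpow_nn
        apply Real.exp_le_exp.2
        rw [← hi2, ← hs2]
        nlinarith [sq_nonneg (a - 2*b), sq_nonneg (a - 64*|β|), sq_nonneg (b - 64*|β|),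
          sq_nonneg (i - 8*|β|), sq_nonneg (s - 16*|β|), sq_nonneg (s - 8)]
    _ = Real.exp (76 * |β| ^ 2 + 2) * Real.exp (-a ^ 2 / 32 - I / 16) *
        (Real.exp (-(1/128) * b ^ 2) * (Is ^ (δ / 4 - 1) * Real.exp (-(1/16) * Is))) := by
        simp only [Real.exp_add]
        ring

private lemma gauss_int : Integrable (fun x : EuclideanSpace ℝ (Fin 3) =>
    Real.exp (-(1/128) * ‖x‖^2)) := by
  have h := (GaussianFourier.integrable_cexp_neg_mul_sq_norm_add
      (V := EuclideanSpace ℝ (Fin 3)) (b := (1/128 : ℂ)) (by norm_num) 0 0).norm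
  refine h.congr (Filter.Eventually.of_forall fun x => ?_)
  simp [Complex.norm_exp]
  norm_cast

theorem loss_kernel_weighted_bound (δ m β : ℝ) (hδ : 2 ≤ δ)
    (hm : m ∈ Set.Icc (0:ℝ) (1/8)) :
    ∃ C > 0, ∀ (v : EuclideanSpace ℝ (Fin 3)) (I : ℝ), 0 < I →
      (∫ vs : EuclideanSpace ℝ (Fin 3), ∫ Is in Set.Ioi (0:ℝ),
          Is ^ (δ / 4 - 1) *
            Real.exp (-‖v‖ ^ 2 / 16 - ‖vs‖ ^ 2 / 16 - I / 8 - Is / 8) *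
            Real.exp (‖v - vs‖ ^ 2 / 64) * (1 + Is) ^ m *
            ((1 + ‖v‖ + Real.sqrt I) ^ β / (1 + ‖vs‖ + Real.sqrt Is) ^ β))
        ≤ C * Real.exp (-‖v‖ ^ 2 / 32 - I / 16) := by
  obtain ⟨hm0, hm1⟩ := hm
  have hΓ : IntegrableOn (fun Is : ℝ => Is ^ (δ/4-1) * Real.exp (-(1/16) * Is))
      (Set.Ioi 0) := by
    have h := integrableOn_rpow_mul_exp_neg_mul_rpow (p := 1) (s := δ/4-1) (b := 1/16)
      (by linarith) one_pos (by norm_num)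
    refine h.congr_fun (fun x hx => ?_) measurableSet_Ioi
    simp only [Real.rpow_one]
  set Kc := Real.exp (76 * |β| ^ 2 + 2) with hKc
  set Γc := ∫ Is in Set.Ioi (0:ℝ), Is ^ (δ/4-1) * Real.exp (-(1/16) * Is) with hΓc
  set Gc := ∫ vs : EuclideanSpace ℝ (Fin 3), Real.exp (-(1/128) * ‖vs‖^2) with hGc
  have hΓc0 : 0 ≤ Γc := setIntegral_nonneg measurableSet_Ioi fun x hx =>
    mul_nonneg (Real.rpow_nonneg (le_of_lt hx) _) (Real.exp_nonneg _)
  have hGc0 : 0 ≤ Gc := integral_nonneg fun x => Real.exp_nonneg _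
  have hKc0 : 0 < Kc := Real.exp_pos _
  refine ⟨Kc * Gc * Γc + 1, by positivity, fun v I hI => ?_⟩
  set A := Real.exp (-‖v‖ ^ 2 / 32 - I / 16) with hA
  have hA0 : 0 < A := Real.exp_pos _
  -- nonnegativity of the integrand
  have hf_nonneg : ∀ (vs : EuclideanSpace ℝ (Fin 3)) (Is : ℝ), 0 < Is →
      0 ≤ Is ^ (δ / 4 - 1) *
        Real.exp (-‖v‖ ^ 2 / 16 - ‖vs‖ ^ 2 / 16 - I / 8 - Is / 8) *
        Real.exp (‖v - vs‖ ^ 2 / 64) * (1 + Is) ^ m *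
        ((1 + ‖v‖ + Real.sqrt I) ^ β / (1 + ‖vs‖ + Real.sqrt Is) ^ β) := by
    intro vs Is hIs
    refine mul_nonneg (mul_nonneg (mul_nonneg (mul_nonneg
      (Real.rpow_nonneg hIs.le _) (Real.exp_nonneg _)) (Real.exp_nonneg _))
      (Real.rpow_nonneg (by linarith) _)) ?_
    exact div_nonneg (Real.rpow_nonneg (by positivity) _) (Real.rpow_nonneg (by positivity) _)
  -- inner integral bound
  have hinner : ∀ vs : EuclideanSpace ℝ (Fin 3),
      (∫ Is in Set.Ioi (0:ℝ),
          Is ^ (δ / 4 - 1) *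
            Real.exp (-‖v‖ ^ 2 / 16 - ‖vs‖ ^ 2 / 16 - I / 8 - Is / 8) *
            Real.exp (‖v - vs‖ ^ 2 / 64) * (1 + Is) ^ m *
            ((1 + ‖v‖ + Real.sqrt I) ^ β / (1 + ‖vs‖ + Real.sqrt Is) ^ β))
        ≤ (Kc * A * Real.exp (-(1/128) * ‖vs‖^2)) * Γc := by
    intro vs
    have hstep : (∫ Is in Set.Ioi (0:ℝ),
          Is ^ (δ / 4 - 1) *
            Real.exp (-‖v‖ ^ 2 / 16 - ‖vs‖ ^ 2 / 16 - I / 8 - Is / 8) *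
            Real.exp (‖v - vs‖ ^ 2 / 64) * (1 + Is) ^ m *
            ((1 + ‖v‖ + Real.sqrt I) ^ β / (1 + ‖vs‖ + Real.sqrt Is) ^ β))
        ≤ ∫ Is in Set.Ioi (0:ℝ),
            (Kc * A * Real.exp (-(1/128) * ‖vs‖^2)) *
              (Is ^ (δ/4-1) * Real.exp (-(1/16) * Is)) := by
      refine integral_mono_of_nonneg ?_ (hΓ.const_mul _) ?_
      · exact (ae_restrict_iff' measurableSet_Ioi).2 (ae_of_all _ fun Is hIs =>
          hf_nonneg vs Is hIs)
      · refine (ae_restrict_iff' measurableSet_Ioi).2 (ae_of_all _ fun Is hIs => ?_)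
        have := ptwise_aux δ m β hm0 hm1 v vs I Is hI hIs
        calc _ ≤ Kc * A * (Real.exp (-(1/128) * ‖vs‖^2) *
            (Is ^ (δ/4-1) * Real.exp (-(1/16) * Is))) := this
        _ = (Kc * A * Real.exp (-(1/128) * ‖vs‖^2)) *
              (Is ^ (δ/4-1) * Real.exp (-(1/16) * Is)) := by ring
    calc _ ≤ _ := hstep
    _ = (Kc * A * Real.exp (-(1/128) * ‖vs‖^2)) * Γc := by
        rw [MeasureTheory.integral_const_mul]
  -- outer integral
  calc (∫ vs : EuclideanSpace ℝ (Fin 3), ∫ Is in Set.Ioi (0:ℝ),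
          Is ^ (δ / 4 - 1) *
            Real.exp (-‖v‖ ^ 2 / 16 - ‖vs‖ ^ 2 / 16 - I / 8 - Is / 8) *
            Real.exp (‖v - vs‖ ^ 2 / 64) * (1 + Is) ^ m *
            ((1 + ‖v‖ + Real.sqrt I) ^ β / (1 + ‖vs‖ + Real.sqrt Is) ^ β))
      ≤ ∫ vs : EuclideanSpace ℝ (Fin 3),
          (Kc * A * Γc) * Real.exp (-(1/128) * ‖vs‖^2) := by
        refine integral_mono_of_nonneg ?_ (gauss_int.const_mul _) ?_
        · exact ae_of_all _ fun vs => setIntegral_nonneg measurableSet_Ioi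
            fun Is hIs => hf_nonneg vs Is hIs
        · exact ae_of_all _ fun vs => le_of_le_of_eq (hinner vs) (by ring)
    _ = (Kc * A * Γc) * Gc := by rw [MeasureTheory.integral_const_mul]
    _ ≤ (Kc * Gc * Γc + 1) * A := by nlinarith
end
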